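/- arXiv:1702.03533 — 2 statements merged into one kernel-verified Lean document; each statement's English description precedes it below -/
import Mathlib

section
/- For λ ≥ λ*, the numbers p₀ = ψ(λ)/(λψ'(λ)), p₁ = 0, and for k ≥ 2, p_k = (1/(λψ'(λ)))(βλ² 𝟙_{k=2} + ∫₀^∞ ((λr)^k/k!) e^{-λr} Π(dr)) form a probability distribution on ℕ₀, i.e. Σ_{k≥0} p_k = 1. -/
open MeasureTheory Real Set

lemma hs_exp (x : ℝ) : HasSum (fun n : ℕ => x ^ n / (n.factorial : ℝ)) (Real.exp x) := by
  rw [Real.exp_eq_exp_ℝ]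
  exact NormedSpace.expSeries_div_hasSum_exp x

lemma hs_tail (x : ℝ) :
    HasSum (fun k : ℕ => x ^ (k + 2) / ((k + 2).factorial : ℝ)) (Real.exp x - 1 - x) := by
  have h := (hasSum_nat_add_iff' (f := fun n : ℕ => x ^ n / (n.factorial : ℝ)) 2).mpr (hs_exp x)
  simpa [Finset.sum_range_succ, sub_sub] using h

lemma exp_mul_exp_neg (x : ℝ) : Real.exp x * Real.exp (-x) = 1 := by
  rw [← Real.exp_add]; simp

lemma hs_g (x : ℝ) :
    HasSum (fun k : ℕ => x ^ (k + 2) / ((k + 2).factorial : ℝ) * Real.exp (-x))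
      (1 - Real.exp (-x) - x * Real.exp (-x)) := by
  have h := (hs_tail x).mul_right (Real.exp (-x))
  have he : (Real.exp x - 1 - x) * Real.exp (-x) = 1 - Real.exp (-x) - x * Real.exp (-x) := by
    nlinarith [exp_mul_exp_neg x]
  rwa [he] at h

lemma n1 {y : ℝ} : 0 ≤ Real.exp (-y) - 1 + y := by
  have := Real.add_one_le_exp (-y); linarith

lemma n3pre {y : ℝ} : 0 ≤ Real.exp y - 1 - y := by
  have := Real.add_one_le_exp y; linarith

lemma n3 {y : ℝ} : 0 ≤ 1 - Real.exp (-y) - y * Real.exp (-y) := by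
  have h : (Real.exp y - 1 - y) * Real.exp (-y) = 1 - Real.exp (-y) - y * Real.exp (-y) := by
    nlinarith [exp_mul_exp_neg y]
  rw [← h]
  exact mul_nonneg n3pre (Real.exp_nonneg _)

lemma exp_neg_le_one {y : ℝ} (hy : 0 ≤ y) : Real.exp (-y) ≤ 1 := by
  rw [← Real.exp_zero]; exact Real.exp_le_exp.mpr (by linarith)

lemma b1 {y : ℝ} (hy : 0 ≤ y) : Real.exp (-y) - 1 + y ≤ min y (y ^ 2) := by
  have hle : Real.exp (-y) - 1 + y ≤ y := by have := exp_neg_le_one hy; linarith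
  refine le_min hle ?_
  rcases le_total y 1 with h | h
  · have habs := Real.abs_exp_sub_one_sub_id_le (x := -y)
      (by rw [abs_neg, abs_of_nonneg hy]; exact h)
    have : Real.exp (-y) - 1 - (-y) ≤ (-y) ^ 2 := le_trans (le_abs_self _) habs
    nlinarith
  · nlinarith

lemma b2 {y : ℝ} (hy : 0 ≤ y) : (1 - Real.exp (-y)) * y ≤ min y (y ^ 2) := by
  have h1 : 1 - Real.exp (-y) ≤ 1 := by have := Real.exp_nonneg (-y); linarith
  have h2 : 1 - Real.exp (-y) ≤ y := by have := Real.add_one_le_exp (-y); linarith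
  exact le_min (by nlinarith) (by nlinarith)

lemma b3 {y : ℝ} (hy : 0 ≤ y) : 1 - Real.exp (-y) - y * Real.exp (-y) ≤ min y (y ^ 2) := by
  have h2 : 1 - Real.exp (-y) ≤ y := by have := Real.add_one_le_exp (-y); linarith
  have hy' : 0 ≤ y * Real.exp (-y) := mul_nonneg hy (Real.exp_nonneg _)
  refine le_min (by linarith) ?_
  rcases le_total y 1 with h | h
  · have habs := Real.abs_exp_sub_one_sub_id_le (x := y) (by rwa [abs_of_nonneg hy])
    have h1 : Real.exp y - 1 - y ≤ y ^ 2 := le_trans (le_abs_self _) habs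
    have := exp_neg_le_one hy
    nlinarith [n3pre (y := y), Real.exp_nonneg (-y), exp_mul_exp_neg y]
  · nlinarith

lemma min_scale {l : ℝ} {x : ℝ} (hx : 0 ≤ x) :
    min (l * x) ((l * x) ^ 2) ≤ max l (l ^ 2) * min x (x ^ 2) := by
  rcases le_total x (x ^ 2) with h | h
  · rw [min_eq_left h]
    calc min (l * x) ((l * x) ^ 2) ≤ l * x := min_le_left _ _
      _ ≤ max l (l ^ 2) * x := mul_le_mul_of_nonneg_right (le_max_left _ _) hx
  · rw [min_eq_right h]
    calc min (l * x) ((l * x) ^ 2) ≤ (l * x) ^ 2 := min_le_right _ _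
      _ = l ^ 2 * x ^ 2 := by ring
      _ ≤ max l (l ^ 2) * x ^ 2 := mul_le_mul_of_nonneg_right (le_max_right _ _) (sq_nonneg _)

/-- For `λ ≥ λ*`, the numbers `p₀ = ψ(λ)/(λψ'(λ))`, `p₁ = 0`, and for `k ≥ 2`
`p_k = (βλ²𝟙_{k=2} + ∫₀^∞ ((λr)^k/k!) e^{-λr} Π(dr))/(λψ'(λ))` sum to `1`. -/
theorem offspring_distribution_sums_to_one
    (α β lstar l : ℝ) (hβ : 0 ≤ β) (Pi : Measure ℝ)
    (hIntMin : IntegrableOn (fun x => min x (x ^ 2)) (Ioi 0) Pi)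
    (ψ ψ' : ℝ → ℝ)
    (hψ : ∀ θ : ℝ, ψ θ =
      -α * θ + β * θ ^ 2 + ∫ x in Ioi 0, (Real.exp (-θ * x) - 1 + θ * x) ∂Pi)
    (hψ' : ∀ t : ℝ, ψ' t =
      -α + 2 * β * t + ∫ x in Ioi 0, (1 - Real.exp (-t * x)) * x ∂Pi)
    (hlstar : 0 < lstar) (hroot : ψ lstar = 0) (hl : lstar ≤ l)
    (hψl : 0 ≤ ψ l) (hψ'l : 0 < ψ' l)
    (p : ℕ → ℝ)
    (hp0 : p 0 = ψ l / (l * ψ' l))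
    (hp1 : p 1 = 0)
    (hpk : ∀ k : ℕ, 2 ≤ k → p k =
      (1 / (l * ψ' l)) *
        ((if k = 2 then β * l ^ 2 else 0) +
          ∫ r in Ioi 0, ((l * r) ^ k / (k.factorial : ℝ)) * Real.exp (-l * r) ∂Pi)) :
    ∑' k : ℕ, p k = 1 := by
  have hl0 : 0 < l := lt_of_lt_of_le hlstar hl
  set D := l * ψ' l with hD
  have hD0 : 0 < D := mul_pos hl0 hψ'l
  -- integrability machinery
  have key : ∀ (C : ℝ) (f : ℝ → ℝ), Continuous f → (∀ x : ℝ, 0 < x → 0 ≤ f x) →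
      (∀ x : ℝ, 0 < x → f x ≤ C * min x (x ^ 2)) →
      IntegrableOn f (Ioi 0) Pi := by
    intro C f hc h0 hb
    refine Integrable.mono' (hIntMin.const_mul C)
      hc.aestronglyMeasurable.restrict ?_
    rw [ae_restrict_iff' measurableSet_Ioi]
    exact ae_of_all _ fun x hx => by
      rw [Real.norm_eq_abs, abs_of_nonneg (h0 x hx)]; exact hb x hx
  have IA : IntegrableOn (fun x => Real.exp (-l * x) - 1 + l * x) (Ioi 0) Pi := by
    refine key (max l (l ^ 2)) _ (by fun_prop)
      (fun x hx => by simpa [neg_mul] using n1 (y := l * x)) ?_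
    intro x hx
    have h1 := b1 (mul_nonneg hl0.le hx.le)
    have h2 := min_scale (l := l) (x := x) hx.le
    simp only [neg_mul]
    nlinarith
  have IB : IntegrableOn (fun x => (1 - Real.exp (-l * x)) * x) (Ioi 0) Pi := by
    refine key (max 1 l) _ (by fun_prop) ?_ ?_
    · intro x hx
      have h2 : Real.exp (-(l * x)) ≤ 1 := exp_neg_le_one (mul_nonneg hl0.le hx.le)
      simp only [neg_mul]
      nlinarith
    · intro x hx
      have h2 : Real.exp (-(l * x)) ≤ 1 := exp_neg_le_one (mul_nonneg hl0.le hx.le)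
      have h3 : 1 - Real.exp (-(l * x)) ≤ l * x := by
        have := Real.add_one_le_exp (-(l * x)); linarith
      simp only [neg_mul]
      rcases le_total x (x ^ 2) with h | h
      · rw [min_eq_left h]
        have : (1 - Real.exp (-(l * x))) * x ≤ 1 * x := by
          nlinarith [mul_nonneg (Real.exp_nonneg (-(l * x))) hx.le]
        calc (1 - Real.exp (-(l * x))) * x ≤ 1 * x := this
          _ ≤ max 1 l * x := mul_le_mul_of_nonneg_right (le_max_left _ _) hx.le
      · rw [min_eq_right h]
        have : (1 - Real.exp (-(l * x))) * x ≤ l * x ^ 2 := by nlinarith [sq_nonneg x]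
        calc (1 - Real.exp (-(l * x))) * x ≤ l * x ^ 2 := this
          _ ≤ max 1 l * x ^ 2 := mul_le_mul_of_nonneg_right (le_max_right _ _) (sq_nonneg _)
  have IH : IntegrableOn (fun x => 1 - Real.exp (-l * x) - l * x * Real.exp (-l * x))
      (Ioi 0) Pi := by
    refine key (max l (l ^ 2)) _ (by fun_prop)
      (fun x hx => by simpa [neg_mul] using n3 (y := l * x)) ?_
    intro x hx
    have h1 := b3 (mul_nonneg hl0.le hx.le)
    have h2 := min_scale (l := l) (x := x) hx.le
    simp only [neg_mul]
    nlinarith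
  -- the series of integrals
  set μ := Pi.restrict (Ioi 0) with hμ
  set g : ℕ → ℝ → ℝ :=
    fun k r => (l * r) ^ (k + 2) / (((k + 2).factorial : ℝ)) * Real.exp (-l * r) with hg
  have hgc : ∀ k, Continuous (g k) := fun k => by fun_prop
  have hgs : ∀ r : ℝ, HasSum (fun k => g k r)
      (1 - Real.exp (-l * r) - l * r * Real.exp (-l * r)) := by
    intro r
    have h := hs_g (l * r)
    simp only [hg, neg_mul]
    exact h
  have hgnn : ∀ k : ℕ, ∀ r ∈ Ioi (0 : ℝ), 0 ≤ g k r := by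
    intro k r hr
    exact mul_nonneg (div_nonneg (pow_nonneg (mul_nonneg hl0.le (le_of_lt hr)) _)
      (by positivity)) (Real.exp_nonneg _)
  have hGm : ∀ k : ℕ, AEMeasurable (fun r => ENNReal.ofReal (g k r)) μ := fun k =>
    (ENNReal.measurable_ofReal.comp (hgc k).measurable).aemeasurable
  have hlt : ∫⁻ r, ENNReal.ofReal (1 - Real.exp (-l * r) - l * r * Real.exp (-l * r)) ∂μ
      = ∑' k, ∫⁻ r, ENNReal.ofReal (g k r) ∂μ := by
    rw [← lintegral_tsum hGm]
    refine lintegral_congr_ae ?_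
    filter_upwards [ae_restrict_mem measurableSet_Ioi] with r hr
    rw [← (hgs r).tsum_eq]
    exact ENNReal.ofReal_tsum_of_nonneg (fun k => hgnn k r hr) (hgs r).summable
  have hfin : ∫⁻ r, ENNReal.ofReal (1 - Real.exp (-l * r) - l * r * Real.exp (-l * r)) ∂μ
      < ⊤ := lt_of_le_of_lt (lintegral_ofReal_le_lintegral_enorm _) IH.2
  have htop : ∀ k : ℕ, ∫⁻ r, ENNReal.ofReal (g k r) ∂μ ≠ ⊤ := by
    intro k
    have h1 : ∑' k, ∫⁻ r, ENNReal.ofReal (g k r) ∂μ ≠ ⊤ := by rw [← hlt]; exact hfin.ne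
    exact ne_top_of_le_ne_top h1 (ENNReal.le_tsum k)
  have hnnae : ∀ k : ℕ, 0 ≤ᵐ[μ] fun r => g k r := by
    intro k
    filter_upwards [ae_restrict_mem measurableSet_Ioi] with r hr using hgnn k r hr
  have hint_eq : ∀ k : ℕ, ∫ r, g k r ∂μ = (∫⁻ r, ENNReal.ofReal (g k r) ∂μ).toReal :=
    fun k => integral_eq_lintegral_of_nonneg_ae (hnnae k)
      (hgc k).aestronglyMeasurable.restrict
  have hsummable : Summable (fun k => ∫ r, g k r ∂μ) := by
    have hs : Summable (fun k => (∫⁻ r, ENNReal.ofReal (g k r) ∂μ).toReal) :=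
      ENNReal.summable_toReal (by rw [← hlt]; exact hfin.ne)
    exact hs.congr fun k => (hint_eq k).symm
  have hHnn : 0 ≤ᵐ[μ] fun r => 1 - Real.exp (-l * r) - l * r * Real.exp (-l * r) := by
    filter_upwards with r using by simpa [neg_mul] using n3 (y := l * r)
  have htsum : ∑' k, ∫ r, g k r ∂μ
      = ∫ r, (1 - Real.exp (-l * r) - l * r * Real.exp (-l * r)) ∂μ := by
    calc ∑' k, ∫ r, g k r ∂μ
        = ∑' k, (∫⁻ r, ENNReal.ofReal (g k r) ∂μ).toReal := tsum_congr hint_eq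
      _ = (∑' k, ∫⁻ r, ENNReal.ofReal (g k r) ∂μ).toReal := (ENNReal.tsum_toReal_eq htop).symm
      _ = (∫⁻ r, ENNReal.ofReal (1 - Real.exp (-l * r) - l * r * Real.exp (-l * r)) ∂μ).toReal := by
          rw [hlt]
      _ = ∫ r, (1 - Real.exp (-l * r) - l * r * Real.exp (-l * r)) ∂μ :=
          (integral_eq_lintegral_of_nonneg_ae hHnn (by fun_prop :
            Continuous fun r => 1 - Real.exp (-l * r) - l * r * Real.exp (-l * r)
            ).aestronglyMeasurable.restrict).symm
  have hHasSum : HasSum (fun k => ∫ r, g k r ∂μ)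
      (∫ r, (1 - Real.exp (-l * r) - l * r * Real.exp (-l * r)) ∂μ) :=
    htsum ▸ hsummable.hasSum
  -- assemble the HasSum for p
  have hpk2 : ∀ k : ℕ, p (k + 2) = (1 / D) *
      ((if k + 2 = 2 then β * l ^ 2 else 0) + ∫ r, g k r ∂μ) :=
    fun k => hpk (k + 2) (by omega)
  have hite : HasSum (fun k : ℕ => if k + 2 = 2 then β * l ^ 2 else 0) (β * l ^ 2) := by
    have h := hasSum_ite_eq (0 : ℕ) (β * l ^ 2)
    have he : (fun k : ℕ => if k + 2 = 2 then β * l ^ 2 else 0)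
        = fun k : ℕ => if k = 0 then β * l ^ 2 else 0 := by
      funext k; rcases k with _ | k <;> simp
    rw [he]; exact h
  have h2 : HasSum (fun k : ℕ => p (k + 2))
      ((1 / D) * (β * l ^ 2 + ∫ r, (1 - Real.exp (-l * r) - l * r * Real.exp (-l * r)) ∂μ)) := by
    have h := (hite.add hHasSum).mul_left (1 / D)
    have he : (fun k : ℕ => p (k + 2)) = fun k =>
        (1 / D) * ((if k + 2 = 2 then β * l ^ 2 else 0) + ∫ r, g k r ∂μ) := funext hpk2
    rw [he]; exact h
  have h3 : HasSum p
      ((1 / D) * (β * l ^ 2 + ∫ r, (1 - Real.exp (-l * r) - l * r * Real.exp (-l * r)) ∂μ)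
        + (p 0 + p 1)) := by
    have h := (hasSum_nat_add_iff (f := p) 2).mp h2
    simpa [Finset.sum_range_succ, add_assoc] using h
  -- identify the integral with l * B - A
  have hH : (∫ r, (1 - Real.exp (-l * r) - l * r * Real.exp (-l * r)) ∂μ)
      = l * (∫ r, (1 - Real.exp (-l * r)) * r ∂μ)
        - ∫ r, (Real.exp (-l * r) - 1 + l * r) ∂μ := by
    have heq : (fun r => 1 - Real.exp (-l * r) - l * r * Real.exp (-l * r))
        = fun r => l * ((1 - Real.exp (-l * r)) * r) - (Real.exp (-l * r) - 1 + l * r) := by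
      funext r; ring
    rw [heq, integral_sub (IB.const_mul l) IA, integral_const_mul]
  have hDid : D = ψ l + β * l ^ 2
      + ∫ r, (1 - Real.exp (-l * r) - l * r * Real.exp (-l * r)) ∂μ := by
    rw [hD, hψ' l, hψ l, hH]; ring
  have hDne : D ≠ 0 := ne_of_gt hD0
  rw [h3.tsum_eq, hp0, hp1]
  have hsplit : 1 / D * (β * l ^ 2
        + ∫ r, (1 - Real.exp (-l * r) - l * r * Real.exp (-l * r)) ∂μ) + (ψ l / D + 0)
      = (β * l ^ 2 + (∫ r, (1 - Real.exp (-l * r) - l * r * Real.exp (-l * r)) ∂μ) + ψ l) / D := by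
    ring
  rw [hsplit, div_eq_one_iff_eq hDne]
  linarith [hDid]
end

section
/- For λ ≥ λ* and s ∈ [0,1], the branching generator satisfies ψ'(λ)(Σ_{k≥0} p_k s^k - s) = λ^{-1} ψ((1-s)λ), where p₀ = ψ(λ)/(λψ'(λ)), p₁ = 0, and p_k = (1/(λψ'(λ)))(βλ² 𝟙_{k=2} + ∫₀^∞ ((λr)^k/k!) e^{-λr} Π(dr)) for k ≥ 2. -/
open MeasureTheory Real Set

private lemma min_helper {a b C r : ℝ} (h1 : a ≤ C * r) (h2 : b ≤ C * r ^ 2) :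
    min a b ≤ C * min r (r ^ 2) := by
  rcases le_total r (r ^ 2) with h | h
  · rw [min_eq_left h]; exact le_trans (min_le_left _ _) h1
  · rw [min_eq_right h]; exact le_trans (min_le_right _ _) h2

private lemma aux_bound1 {x : ℝ} (hx : 0 ≤ x) :
    Real.exp (-x) - 1 + x ≤ min x (x ^ 2) := by
  have h1 := Real.add_one_le_exp x
  have h3 : Real.exp (-x) * Real.exp x = 1 := by
    rw [← Real.exp_add]; simp
  have h4 := Real.exp_pos x
  have h5 := Real.exp_pos (-x)
  refine le_min ?_ ?_
  · nlinarith
  · nlinarith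

private lemma aux_bound3 {y x : ℝ} (hy : 0 ≤ y) (hyx : y ≤ x) :
    (Real.exp y - 1 - y) * Real.exp (-x) ≤ min 1 (x ^ 2) := by
  have h1 := Real.add_one_le_exp y
  have h2 := Real.add_one_le_exp (-y)
  have h3 : Real.exp y * Real.exp (-y) = 1 := by rw [← Real.exp_add]; simp
  have h4 : Real.exp (-x) ≤ Real.exp (-y) := Real.exp_le_exp.mpr (by linarith)
  have h5 := Real.exp_pos (-x)
  have h6 := Real.exp_pos (-y)
  have h7 := Real.exp_pos y
  refine le_min ?_ ?_
  · nlinarith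
  · have key : (Real.exp y - 1 - y) * Real.exp (-y) ≤ y ^ 2 := by nlinarith
    nlinarith

private lemma exp_tail (x : ℝ) :
    ∑' k : ℕ, x ^ (k + 2) / ((k + 2).factorial : ℝ) = Real.exp x - 1 - x := by
  have hs : Summable (fun n : ℕ => x ^ n / (n.factorial : ℝ)) :=
    Real.summable_pow_div_factorial x
  have hexp : Real.exp x = ∑' n : ℕ, x ^ n / (n.factorial : ℝ) := by
    rw [Real.exp_eq_exp_ℝ, NormedSpace.exp_eq_tsum_div]
  have h1 : Summable (fun n : ℕ => x ^ (n + 1) / ((n + 1).factorial : ℝ)) :=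
    (summable_nat_add_iff 1).mpr hs
  have e0 : ∑' n : ℕ, x ^ n / (n.factorial : ℝ)
      = x ^ 0 / ((0:ℕ).factorial : ℝ) + ∑' n : ℕ, x ^ (n + 1) / ((n + 1).factorial : ℝ) :=
    Summable.tsum_eq_zero_add hs
  have e1 : ∑' n : ℕ, x ^ (n + 1) / ((n + 1).factorial : ℝ)
      = x ^ 1 / ((1:ℕ).factorial : ℝ) + ∑' n : ℕ, x ^ (n + 2) / ((n + 2).factorial : ℝ) :=
    Summable.tsum_eq_zero_add h1
  rw [hexp, e0, e1]
  simp [Nat.factorial]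

private lemma summable_tail (x : ℝ) :
    Summable (fun k : ℕ => x ^ (k + 2) / ((k + 2).factorial : ℝ)) :=
  (summable_nat_add_iff 2).mpr (Real.summable_pow_div_factorial x)

private lemma integrable_of_le_min {Pi : Measure ℝ}
    (hIntMin : IntegrableOn (fun x => min x (x ^ 2)) (Ioi 0) Pi)
    {f : ℝ → ℝ} (hf : Continuous f) (C : ℝ)
    (h0 : ∀ r ∈ Ioi (0:ℝ), 0 ≤ f r)
    (hb : ∀ r ∈ Ioi (0:ℝ), f r ≤ C * min r (r ^ 2)) :
    IntegrableOn f (Ioi 0) Pi := by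
  refine (hIntMin.const_mul C).mono' hf.aestronglyMeasurable ?_
  filter_upwards [ae_restrict_mem measurableSet_Ioi] with r hr
  rw [Real.norm_eq_abs, abs_of_nonneg (h0 r hr)]
  exact hb r hr

set_option maxHeartbeats 1000000 in
/-- For `λ ≥ λ*` and `s ∈ [0,1]`, the branching generator satisfies
`ψ'(λ)(Σ_k p_k s^k - s) = λ⁻¹ ψ((1-s)λ)`. -/
theorem branching_generator_identity
    (α β lstar l : ℝ) (hβ : 0 ≤ β) (Pi : Measure ℝ)
    (hIntMin : IntegrableOn (fun x => min x (x ^ 2)) (Ioi 0) Pi)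
    (ψ ψ' : ℝ → ℝ)
    (hψ : ∀ θ : ℝ, ψ θ =
      -α * θ + β * θ ^ 2 + ∫ x in Ioi 0, (Real.exp (-θ * x) - 1 + θ * x) ∂Pi)
    (hψ' : ∀ t : ℝ, ψ' t =
      -α + 2 * β * t + ∫ x in Ioi 0, (1 - Real.exp (-t * x)) * x ∂Pi)
    (hlstar : 0 < lstar) (hroot : ψ lstar = 0) (hl : lstar ≤ l)
    (hψl : 0 ≤ ψ l) (hψ'l : 0 < ψ' l)
    (p : ℕ → ℝ)
    (hp0 : p 0 = ψ l / (l * ψ' l))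
    (hp1 : p 1 = 0)
    (hpk : ∀ k : ℕ, 2 ≤ k → p k =
      (1 / (l * ψ' l)) *
        ((if k = 2 then β * l ^ 2 else 0) +
          ∫ r in Ioi 0, ((l * r) ^ k / (k.factorial : ℝ)) * Real.exp (-l * r) ∂Pi))
    (s : ℝ) (hs0 : 0 ≤ s) (hs1 : s ≤ 1) :
    ψ' l * ((∑' k : ℕ, p k * s ^ k) - s) = l⁻¹ * ψ ((1 - s) * l) := by
  have hl0 : 0 < l := lt_of_lt_of_le hlstar hl
  have hlne : l ≠ 0 := ne_of_gt hl0
  have hψ'ne : ψ' l ≠ 0 := ne_of_gt hψ'l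
  -- the summand functions
  set f : ℕ → ℝ → ℝ :=
    fun k r => (l * r * s) ^ (k + 2) / ((k + 2).factorial : ℝ) * Real.exp (-l * r) with hfdef
  set G : ℝ → ℝ :=
    fun r => (Real.exp (l * r * s) - 1 - l * r * s) * Real.exp (-l * r) with hGdef
  have hf_cont : ∀ k : ℕ, Continuous (f k) := by
    intro k; rw [hfdef]; fun_prop
  have hG_cont : Continuous G := by rw [hGdef]; fun_prop
  have hf_nonneg : ∀ k : ℕ, ∀ r ∈ Ioi (0:ℝ), 0 ≤ f k r := by
    intro k r hr
    have hr0 : (0:ℝ) < r := hr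
    have hx : 0 ≤ l * r * s := mul_nonneg (mul_nonneg hl0.le hr0.le) hs0
    exact mul_nonneg (div_nonneg (pow_nonneg hx _) (by positivity)) (Real.exp_pos _).le
  have hG_nonneg : ∀ r : ℝ, 0 ≤ G r := by
    intro r
    have h1 := Real.add_one_le_exp (l * r * s)
    exact mul_nonneg (by linarith) (Real.exp_pos _).le
  -- integrability of G
  have hintG : IntegrableOn G (Ioi 0) Pi := by
    refine integrable_of_le_min hIntMin hG_cont (max 1 (l ^ 2)) (fun r _ => hG_nonneg r) ?_
    intro r hr
    have hr0 : (0:ℝ) < r := hr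
    have hy : 0 ≤ l * r * s := mul_nonneg (mul_nonneg hl0.le hr0.le) hs0
    have hyx : l * r * s ≤ l * r := by
      nlinarith [mul_pos hl0 hr0]
    have hb := aux_bound3 hy hyx
    have hbb : G r ≤ min 1 ((l * r) ^ 2) := by
      rw [hGdef]
      simpa [neg_mul] using hb
    rcases le_total r 1 with h | h
    · have hm : min r (r ^ 2) = r ^ 2 := min_eq_right (by nlinarith)
      rw [hm]
      calc G r ≤ min 1 ((l * r) ^ 2) := hbb
        _ ≤ (l * r) ^ 2 := min_le_right _ _
        _ = l ^ 2 * r ^ 2 := by ring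
        _ ≤ max 1 (l ^ 2) * r ^ 2 :=
            mul_le_mul_of_nonneg_right (le_max_right _ _) (sq_nonneg r)
    · have hm : min r (r ^ 2) = r := min_eq_left (by nlinarith)
      rw [hm]
      calc G r ≤ min 1 ((l * r) ^ 2) := hbb
        _ ≤ 1 := min_le_left _ _
        _ ≤ r := h
        _ ≤ max 1 (l ^ 2) * r := le_mul_of_one_le_left hr0.le (le_max_left _ _)
  -- integrability of A and B
  have hintA : IntegrableOn (fun r => Real.exp (-l * r) - 1 + l * r) (Ioi 0) Pi := by
    refine integrable_of_le_min hIntMin (by fun_prop) (max l (l ^ 2)) ?_ ?_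
    · intro r hr
      have h := Real.add_one_le_exp (-(l * r))
      rw [neg_mul]
      linarith
    · intro r hr
      have hr0 : (0:ℝ) < r := hr
      have hx : 0 ≤ l * r := mul_nonneg hl0.le hr0.le
      calc Real.exp (-l * r) - 1 + l * r
          = Real.exp (-(l * r)) - 1 + l * r := by rw [neg_mul]
        _ ≤ min (l * r) ((l * r) ^ 2) := aux_bound1 hx
        _ ≤ max l (l ^ 2) * min r (r ^ 2) := by
            refine min_helper ?_ ?_
            · exact mul_le_mul_of_nonneg_right (le_max_left _ _) hr0.le
            · calc (l * r) ^ 2 = l ^ 2 * r ^ 2 := by ring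
                _ ≤ max l (l ^ 2) * r ^ 2 :=
                  mul_le_mul_of_nonneg_right (le_max_right _ _) (sq_nonneg r)
  have hintB : IntegrableOn (fun r => (1 - Real.exp (-l * r)) * r) (Ioi 0) Pi := by
    refine integrable_of_le_min hIntMin (by fun_prop) (max 1 l) ?_ ?_
    · intro r hr
      have hr0 : (0:ℝ) < r := hr
      have h1 : Real.exp (-(l * r)) ≤ 1 := by
        rw [← Real.exp_zero]
        exact Real.exp_le_exp.mpr (by nlinarith)
      rw [neg_mul]
      nlinarith
    · intro r hr
      have hr0 : (0:ℝ) < r := hr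
      have h2 := Real.add_one_le_exp (-(l * r))
      have h1 : Real.exp (-(l * r)) ≤ 1 := by
        rw [← Real.exp_zero]
        exact Real.exp_le_exp.mpr (by nlinarith)
      rcases le_total r 1 with h | h
      · have hm : min r (r ^ 2) = r ^ 2 := min_eq_right (by nlinarith)
        rw [hm, neg_mul]
        calc (1 - Real.exp (-(l * r))) * r ≤ (l * r) * r :=
              mul_le_mul_of_nonneg_right (by linarith) hr0.le
          _ = l * r ^ 2 := by ring
          _ ≤ max 1 l * r ^ 2 :=
            mul_le_mul_of_nonneg_right (le_max_right _ _) (sq_nonneg r)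
      · have hm : min r (r ^ 2) = r := min_eq_left (by nlinarith)
        rw [hm, neg_mul]
        have he := (Real.exp_pos (-(l * r))).le
        calc (1 - Real.exp (-(l * r))) * r ≤ 1 * r :=
              mul_le_mul_of_nonneg_right (by linarith) hr0.le
          _ ≤ max 1 l * r := mul_le_mul_of_nonneg_right (le_max_left _ _) hr0.le
  -- nonnegativity a.e. on the restricted measure
  have hG_nonneg_ae : 0 ≤ᵐ[Pi.restrict (Ioi 0)] G := Filter.Eventually.of_forall hG_nonneg
  have hf_nonneg_ae : ∀ k : ℕ, 0 ≤ᵐ[Pi.restrict (Ioi 0)] f k := by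
    intro k
    filter_upwards [ae_restrict_mem measurableSet_Ioi] with r hr
    exact hf_nonneg k r hr
  -- pointwise sum of the series
  have hsumf : ∀ r : ℝ, Summable (fun k : ℕ => f k r) := fun r =>
    (summable_tail (l * r * s)).mul_right _
  have hptsum : ∀ r : ℝ, ∑' k : ℕ, f k r = G r := by
    intro r
    rw [hfdef, hGdef]
    calc ∑' k : ℕ, (l * r * s) ^ (k + 2) / ((k + 2).factorial : ℝ) * Real.exp (-l * r)
        = (∑' k : ℕ, (l * r * s) ^ (k + 2) / ((k + 2).factorial : ℝ)) * Real.exp (-l * r) :=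
          tsum_mul_right
      _ = (Real.exp (l * r * s) - 1 - l * r * s) * Real.exp (-l * r) := by
          rw [exp_tail]
  -- the lintegral interchange
  have hlkey : ∑' k : ℕ, ∫⁻ r, ENNReal.ofReal (f k r) ∂(Pi.restrict (Ioi 0))
      = ∫⁻ r, ENNReal.ofReal (G r) ∂(Pi.restrict (Ioi 0)) := by
    rw [← lintegral_tsum (fun k => ((hf_cont k).measurable.ennreal_ofReal).aemeasurable)]
    refine lintegral_congr_ae ?_
    filter_upwards [ae_restrict_mem measurableSet_Ioi] with r hr
    rw [← ENNReal.ofReal_tsum_of_nonneg (fun k => hf_nonneg k r hr) (hsumf r), hptsum r]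
  have hGfin : ∫⁻ r, ENNReal.ofReal (G r) ∂(Pi.restrict (Ioi 0)) < ⊤ :=
    (hasFiniteIntegral_iff_ofReal hG_nonneg_ae).mp hintG.2
  have hfin : ∀ k : ℕ, ∫⁻ r, ENNReal.ofReal (f k r) ∂(Pi.restrict (Ioi 0)) ≠ ⊤ := by
    intro k
    have hle : ∫⁻ r, ENNReal.ofReal (f k r) ∂(Pi.restrict (Ioi 0))
        ≤ ∑' k : ℕ, ∫⁻ r, ENNReal.ofReal (f k r) ∂(Pi.restrict (Ioi 0)) :=
      ENNReal.le_tsum k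
    refine ne_top_of_le_ne_top ?_ hle
    rw [hlkey]
    exact hGfin.ne
  have hintf : ∀ k : ℕ, IntegrableOn (f k) (Ioi 0) Pi := by
    intro k
    exact ⟨(hf_cont k).aestronglyMeasurable,
      (hasFiniteIntegral_iff_ofReal (hf_nonneg_ae k)).mpr (lt_top_iff_ne_top.mpr (hfin k))⟩
  have hFval : ∀ k : ℕ, ∫ r in Ioi 0, f k r ∂Pi
      = (∫⁻ r, ENNReal.ofReal (f k r) ∂(Pi.restrict (Ioi 0))).toReal := fun k =>
    integral_eq_lintegral_of_nonneg_ae (hf_nonneg_ae k) (hf_cont k).aestronglyMeasurable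
  have hGval : ∫ r in Ioi 0, G r ∂Pi
      = (∫⁻ r, ENNReal.ofReal (G r) ∂(Pi.restrict (Ioi 0))).toReal :=
    integral_eq_lintegral_of_nonneg_ae hG_nonneg_ae hG_cont.aestronglyMeasurable
  have hFsummable : Summable (fun k : ℕ => ∫ r in Ioi 0, f k r ∂Pi) := by
    have h := ENNReal.summable_toReal (f := fun k : ℕ =>
      ∫⁻ r, ENNReal.ofReal (f k r) ∂(Pi.restrict (Ioi 0))) (by rw [hlkey]; exact hGfin.ne)
    exact h.congr fun k => (hFval k).symm
  have hFtsum : ∑' k : ℕ, ∫ r in Ioi 0, f k r ∂Pi = ∫ r in Ioi 0, G r ∂Pi := by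
    rw [tsum_congr hFval, ← ENNReal.tsum_toReal_eq hfin, hlkey, ← hGval]
  -- rewrite the coefficients
  have hpull : ∀ k : ℕ,
      s ^ (k + 2) * ∫ r in Ioi 0, ((l * r) ^ (k + 2) / ((k + 2).factorial : ℝ))
        * Real.exp (-l * r) ∂Pi = ∫ r in Ioi 0, f k r ∂Pi := by
    intro k
    rw [← integral_const_mul]
    congr 1
    funext r
    simp only [hfdef]
    ring
  have hterm : ∀ k : ℕ, p (k + 2) * s ^ (k + 2)
      = (if k = 0 then β * l ^ 2 * s ^ 2 / (l * ψ' l) else 0)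
        + (1 / (l * ψ' l)) * ∫ r in Ioi 0, f k r ∂Pi := by
    intro k
    rw [hpk (k + 2) (by omega)]
    have hcond : (k + 2 = 2) ↔ (k = 0) := by omega
    rw [if_congr hcond rfl rfl]
    by_cases hk : k = 0
    · subst hk
      rw [if_pos rfl, if_pos rfl]
      have h := hpull 0
      linear_combination (1 / (l * ψ' l)) * h
    · rw [if_neg hk, if_neg hk]
      have h := hpull k
      linear_combination (1 / (l * ψ' l)) * h
  -- sum the series
  have hite := hasSum_ite_eq (0 : ℕ) (β * l ^ 2 * s ^ 2 / (l * ψ' l))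
  have hsum2 : Summable (fun k : ℕ => p (k + 2) * s ^ (k + 2)) :=
    (hite.summable.add (hFsummable.mul_left (1 / (l * ψ' l)))).congr
      fun k => (hterm k).symm
  have htsum2 : ∑' k : ℕ, p (k + 2) * s ^ (k + 2)
      = β * l ^ 2 * s ^ 2 / (l * ψ' l)
        + (1 / (l * ψ' l)) * ∫ r in Ioi 0, G r ∂Pi := by
    rw [tsum_congr hterm,
      Summable.tsum_add hite.summable (hFsummable.mul_left (1 / (l * ψ' l))),
      hite.tsum_eq, tsum_mul_left, hFtsum]
  have hsumall : Summable (fun k : ℕ => p k * s ^ k) := (summable_nat_add_iff 2).mp hsum2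
  have htsum_all : ∑' k : ℕ, p k * s ^ k
      = p 0 + (β * l ^ 2 * s ^ 2 / (l * ψ' l)
        + (1 / (l * ψ' l)) * ∫ r in Ioi 0, G r ∂Pi) := by
    calc ∑' k : ℕ, p k * s ^ k
        = p 0 * s ^ 0 + ∑' k : ℕ, p (k + 1) * s ^ (k + 1) := Summable.tsum_eq_zero_add hsumall
      _ = p 0 * s ^ 0 + (p 1 * s ^ 1 + ∑' k : ℕ, p (k + 2) * s ^ (k + 2)) := by
          exact congrArg (fun z => p 0 * s ^ 0 + z)
            (Summable.tsum_eq_zero_add ((summable_nat_add_iff 1).mpr hsumall))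
      _ = p 0 + ∑' k : ℕ, p (k + 2) * s ^ (k + 2) := by rw [hp1]; ring
      _ = p 0 + (β * l ^ 2 * s ^ 2 / (l * ψ' l)
          + (1 / (l * ψ' l)) * ∫ r in Ioi 0, G r ∂Pi) := by rw [htsum2]
  -- the integral identity for ψ((1-s)l)
  have hID : (∫ x in Ioi 0, (Real.exp (-((1 - s) * l) * x) - 1 + (1 - s) * l * x) ∂Pi)
      = (∫ r in Ioi 0, (Real.exp (-l * r) - 1 + l * r) ∂Pi)
        + (∫ r in Ioi 0, G r ∂Pi)
        - s * l * ∫ r in Ioi 0, (1 - Real.exp (-l * r)) * r ∂Pi := by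
    have hfun : (fun x : ℝ => Real.exp (-((1 - s) * l) * x) - 1 + (1 - s) * l * x)
        = fun r => (Real.exp (-l * r) - 1 + l * r) + G r
          - s * l * ((1 - Real.exp (-l * r)) * r) := by
      funext r
      have hexp : Real.exp (-((1 - s) * l) * r) = Real.exp (l * r * s) * Real.exp (-l * r) := by
        rw [← Real.exp_add]; congr 1; ring
      rw [hGdef, hexp]
      ring
    have hintAG : IntegrableOn (fun r => (Real.exp (-l * r) - 1 + l * r) + G r) (Ioi 0) Pi :=
      hintA.add hintG
    have hintB' : IntegrableOn (fun r => s * l * ((1 - Real.exp (-l * r)) * r)) (Ioi 0) Pi :=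
      hintB.const_mul (s * l)
    rw [hfun, integral_sub hintAG hintB', integral_add hintA hintG, integral_const_mul]
  -- put everything together
  set IA := ∫ r in Ioi 0, (Real.exp (-l * r) - 1 + l * r) ∂Pi with hIA
  set IB := ∫ r in Ioi 0, (1 - Real.exp (-l * r)) * r ∂Pi with hIB
  set IG := ∫ r in Ioi 0, G r ∂Pi with hIG
  rw [htsum_all, hp0, hψ ((1 - s) * l), hID]
  have hψlval : ψ l = -α * l + β * l ^ 2 + IA := hψ l
  have hψ'lval : ψ' l = -α + 2 * β * l + IB := hψ' l
  rw [hψlval, hψ'lval]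
  have hne : -α + 2 * β * l + IB ≠ 0 := by
    rw [← hψ'lval]; exact hψ'ne
  field_simp [hlne, hne]
  ring
end
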